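/- arXiv:1007.1679 — 2 statements merged into one kernel-verified Lean document; each statement's English description precedes it below -/
import Mathlib

section
/- Let a < b be real numbers, n ≥ 1, H : ℝⁿ → ℝ be continuously differentiable with partial derivatives H'_1, …, H'_n, and for i = 1, …, n let f_i : [a,b] × ℝ × ℝ → ℝ, (t,y,v) ↦ f_i(t,y,v), be continuous with continuous partial derivatives f_{iy} and f_{iv} with respect to y and v. Suppose x̃ : [a,b] → ℝ is C¹ with x̃(a) = x_a and x̃(b) = x_b, that for each i the map t ↦ f_{iv}(t, x̃(t), x̃'(t)) is differentiable on [a,b], and that x̃ is a weak local extremizer of L[x] = H(F_1[x], …, F_n[x]) among admissible functions: there exists δ > 0 such that L[x̃] ≤ L[x] for every C¹ function x : [a,b] → ℝ with x(a) = x_a, x(b) = x_b and ‖x − x̃‖₁ < δ (or L[x̃] ≥ L[x] for all such x). Then the Euler–Lagrange equation ∑_{i=1}^{n} H'_i(F_1[x̃], …, F_n[x̃]) · ( f_{iy}(t, x̃(t), x̃'(t)) − (d/dt) f_{iv}(t, x̃(t), x̃'(t)) ) = 0 holds for all t ∈ [a,b]. -/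
/-!
Perturb the extremal `x̃` in an admissible direction `η` (C¹, vanishing at `a` and `b`): the
real function `ε ↦ L[x̃ + εη]` has a local extremum at `0`, and differentiating under the
integral sign and through `H` shows that its derivative there is
`∫ₐᵇ (g η + h η')` with `g = ∑ᵢ H'ᵢ f_{iy}` and `h = ∑ᵢ H'ᵢ f_{iv}` evaluated along `x̃`.
By the du Bois-Reymond lemma, the vanishing of this first variation for every `η` forces
`h' = g` on `[a, b]`, which is the Euler–Lagrange equation.
-/

/-- The C¹-norm ‖x‖₁ = sup_{t∈[a,b]} |x(t)| + sup_{t∈[a,b]} |x'(t)|. -/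
noncomputable def C1Norm (a b : ℝ) (x : ℝ → ℝ) : ℝ :=
  (⨆ t : Set.Icc a b, |x t|) + (⨆ t : Set.Icc a b, |derivWithin x (Set.Icc a b) t|)

open Set Filter Topology MeasureTheory Function
open scoped Interval

theorem hasDerivAt_comp_of_continuous_partials {g gy gv : ℝ → ℝ → ℝ}
    (hgy : ∀ y v, HasDerivAt (g · v) (gy y v) y) (hgv : ∀ y v, HasDerivAt (g y ·) (gv y v) v)
    (hgy_cont : Continuous (uncurry gy)) (hgv_cont : Continuous (uncurry gv))
    {Y V : ℝ → ℝ} {Y' V' s : ℝ} (hY : HasDerivAt Y Y' s) (hV : HasDerivAt V V' s) :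
    HasDerivAt (fun s => g (Y s) (V s)) (gy (Y s) (V s) * Y' + gv (Y s) (V s) * V') s := by
  have hsmul : Continuous fun c : ℝ => (1 : ℝ →L[ℝ] ℝ).smulRight c := by fun_prop
  have hg := hasStrictFDerivAt_uncurry_coprod
    (f₁ := fun y v => (1 : ℝ →L[ℝ] ℝ).smulRight (gy y v))
    (f₂ := fun y v => (1 : ℝ →L[ℝ] ℝ).smulRight (gv y v))
    (.of_forall fun p => (hgy p.1 p.2).hasFDerivAt) (.of_forall fun p => (hgv p.1 p.2).hasFDerivAt)
    (hsmul.comp hgy_cont).continuousAt (hsmul.comp hgv_cont).continuousAt (u := (Y s, V s))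
  refine (hg.hasFDerivAt.comp_hasDerivAt s (hY.prodMk hV)).congr_deriv ?_
  simp [HasUncurry.uncurry, mul_comm]

theorem hasDerivAt_intervalIntegral_of_continuousOn {F F' : ℝ → ℝ → ℝ} {a b ε₀ r : ℝ}
    (hr : 0 < r) (hF : ContinuousOn (uncurry F) (Metric.closedBall ε₀ r ×ˢ [[a, b]]))
    (hF' : ContinuousOn (uncurry F') (Metric.closedBall ε₀ r ×ˢ [[a, b]]))
    (hderiv : ∀ t ∈ [[a, b]], ∀ ε ∈ Metric.ball ε₀ r, HasDerivAt (F · t) (F' ε t) ε) :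
    HasDerivAt (fun ε => ∫ t in a..b, F ε t) (∫ t in a..b, F' ε₀ t) ε₀ := by
  have hslice : ∀ {G : ℝ → ℝ → ℝ},
      ContinuousOn (uncurry G) (Metric.closedBall ε₀ r ×ˢ [[a, b]]) →
      ∀ ε ∈ Metric.closedBall ε₀ r, ContinuousOn (G ε) [[a, b]] := fun hG ε hε =>
    hG.comp (f := fun t => (ε, t)) (by fun_prop) fun _ ht => ⟨hε, ht⟩
  have hmeas : ∀ {G : ℝ → ℝ}, ContinuousOn G [[a, b]] →
      AEStronglyMeasurable G (volume.restrict (Ι a b)) :=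
    fun hG => (hG.mono uIoc_subset_uIcc).aestronglyMeasurable measurableSet_uIoc
  have hball : ∀ ε ∈ Metric.ball ε₀ r, ε ∈ Metric.closedBall ε₀ r :=
    fun _ hε => Metric.ball_subset_closedBall hε
  have hε₀ : ε₀ ∈ Metric.closedBall ε₀ r := Metric.mem_closedBall_self hr.le
  obtain ⟨C, hC⟩ :=
    ((isCompact_closedBall ε₀ r).prod isCompact_uIcc).exists_bound_of_continuousOn hF'
  refine (intervalIntegral.hasDerivAt_integral_of_dominated_loc_of_deriv_le (bound := fun _ => C)
    (Metric.ball_mem_nhds ε₀ hr) ?_ ?_ ?_ ?_ intervalIntegrable_const ?_).2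
  · filter_upwards [Metric.ball_mem_nhds ε₀ hr] with ε hε
    exact hmeas (hslice hF ε (hball ε hε))
  · exact (hslice hF ε₀ hε₀).intervalIntegrable
  · exact hmeas (hslice hF' ε₀ hε₀)
  · exact .of_forall fun t ht ε hε => hC (ε, t) ⟨hball ε hε, uIoc_subset_uIcc ht⟩
  · exact .of_forall fun t ht ε hε => hderiv t (uIoc_subset_uIcc ht) ε hε

theorem ContinuousOn.hasDerivWithinAt_integral_Icc {a b t : ℝ} {g : ℝ → ℝ}
    (hg : ContinuousOn g (Icc a b)) (ht : t ∈ Icc a b) :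
    HasDerivWithinAt (fun u => ∫ s in a..u, g s) (g t) (Icc a b) t := by
  have : Fact (t ∈ Icc a b) := ⟨ht⟩
  refine intervalIntegral.integral_hasDerivWithinAt_right ?_
    (hg.stronglyMeasurableAtFilter_nhdsWithin measurableSet_Icc t) (hg t ht)
  exact (hg.mono (Icc_subset_Icc_right ht.2)).intervalIntegrable_of_Icc ht.1

theorem ContinuousOn.eqOn_zero_of_integral_eq_zero {a b : ℝ} (hab : a < b) {g : ℝ → ℝ}
    (hg : ContinuousOn g (Icc a b)) (hg_nonneg : ∀ t ∈ Icc a b, 0 ≤ g t)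
    (hg_int : ∫ t in a..b, g t = 0) : EqOn g 0 (Icc a b) := by
  have hae := (intervalIntegral.integral_eq_zero_iff_of_le_of_nonneg_ae hab.le
    ((ae_restrict_iff' measurableSet_Ioc).2
      (.of_forall fun t ht => hg_nonneg t (Ioc_subset_Icc_self ht)))
    (hg.intervalIntegrable_of_Icc hab.le)).1 hg_int
  rw [Measure.restrict_congr_set Ioc_ae_eq_Icc] at hae
  exact Measure.eqOn_Icc_of_ae_eq volume hab.ne hae hg continuousOn_const

theorem exists_eqOn_const_of_integral_mul_derivWithin_eq_zero {a b : ℝ} (hab : a < b)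
    {h : ℝ → ℝ} (hh : ContinuousOn h (Icc a b))
    (hvar : ∀ η : ℝ → ℝ, ContDiffOn ℝ 1 η (Icc a b) → η a = 0 → η b = 0 →
      ∫ t in a..b, h t * derivWithin η (Icc a b) t = 0) :
    ∃ K, EqOn h (fun _ => K) (Icc a b) := by
  set K := (∫ t in a..b, h t) / (b - a)
  have hhK : ContinuousOn (fun t => h t - K) (Icc a b) := hh.sub continuousOn_const
  -- `K` is the mean of `h`, so the primitive `η` of `h - K` is an admissible test function, and
  -- `∫ (h - K)² = ∫ h η' - K η b = 0`.
  set η : ℝ → ℝ := fun u => ∫ t in a..u, (h t - K)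
  have hη' : ∀ t ∈ Icc a b, HasDerivWithinAt η (h t - K) (Icc a b) t :=
    fun t ht => hhK.hasDerivWithinAt_integral_Icc ht
  have hη'_eq : EqOn (derivWithin η (Icc a b)) (fun t => h t - K) (Icc a b) :=
    fun t ht => (hη' t ht).derivWithin (uniqueDiffOn_Icc hab t ht)
  have hηC1 : ContDiffOn ℝ 1 η (Icc a b) :=
    (contDiffOn_one_iff_derivWithin (uniqueDiffOn_Icc hab)).2
      ⟨fun t ht => (hη' t ht).differentiableWithinAt, hhK.congr hη'_eq⟩
  have hηb : η b = 0 := by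
    simp only [η, K]
    rw [intervalIntegral.integral_sub (hh.intervalIntegrable_of_Icc hab.le)
      intervalIntegrable_const, intervalIntegral.integral_const, smul_eq_mul]
    field_simp [sub_ne_zero.2 hab.ne']
    ring
  have hsq : ∫ t in a..b, (h t - K) ^ 2 = 0 := by
    have hhη := hvar η hηC1 (by simp [η]) hηb
    have hη'_eq' : EqOn (fun t => h t * derivWithin η (Icc a b) t) (fun t => h t * (h t - K))
        [[a, b]] := by
      rw [uIcc_of_le hab.le]
      exact fun t ht => by simp only [hη'_eq ht]
    rw [intervalIntegral.integral_congr hη'_eq'] at hhη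
    calc ∫ t in a..b, (h t - K) ^ 2
        = (∫ t in a..b, h t * (h t - K)) - K * η b := by
          rw [← intervalIntegral.integral_const_mul, ← intervalIntegral.integral_sub]
          · exact intervalIntegral.integral_congr fun t _ => by ring
          · exact (hh.mul hhK).intervalIntegrable_of_Icc hab.le
          · exact (continuousOn_const.mul hhK).intervalIntegrable_of_Icc hab.le
      _ = 0 := by rw [hhη, hηb]; ring
  refine ⟨K, fun t ht => ?_⟩
  have := (hhK.pow 2).eqOn_zero_of_integral_eq_zero hab (fun t _ => sq_nonneg _) hsq ht
  simpa [sub_eq_zero] using this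

theorem hasDerivWithinAt_of_integral_variation_eq_zero {a b : ℝ} (hab : a < b) {g h : ℝ → ℝ}
    (hg : ContinuousOn g (Icc a b)) (hh : ContinuousOn h (Icc a b))
    (hvar : ∀ η : ℝ → ℝ, ContDiffOn ℝ 1 η (Icc a b) → η a = 0 → η b = 0 →
      ∫ t in a..b, (g t * η t + h t * derivWithin η (Icc a b) t) = 0) :
    ∀ t ∈ Icc a b, HasDerivWithinAt h (g t) (Icc a b) t := by
  set G : ℝ → ℝ := fun u => ∫ s in a..u, g s
  have hG : ∀ t ∈ Icc a b, HasDerivWithinAt G (g t) (Icc a b) t :=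
    fun t ht => hg.hasDerivWithinAt_integral_Icc ht
  have hGc : ContinuousOn G (Icc a b) := fun t ht => (hG t ht).continuousWithinAt
  -- Integrating `g η` by parts turns the hypothesis into `∫ (h - G) η' = 0`.
  have hvar' : ∀ η : ℝ → ℝ, ContDiffOn ℝ 1 η (Icc a b) → η a = 0 → η b = 0 →
      ∫ t in a..b, (h t - G t) * derivWithin η (Icc a b) t = 0 := by
    intro η hη hηa hηb
    have hη' : ContinuousOn (derivWithin η (Icc a b)) (Icc a b) :=
      hη.continuousOn_derivWithin (uniqueDiffOn_Icc hab) le_rfl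
    have hint : ∀ {φ : ℝ → ℝ}, ContinuousOn φ (Icc a b) → IntervalIntegrable φ volume a b :=
      fun hφ => hφ.intervalIntegrable_of_Icc hab.le
    have hI : [[a, b]] = Icc a b := uIcc_of_le hab.le
    have hparts : ∫ t in a..b, (g t * η t + G t * derivWithin η (Icc a b) t) = 0 := by
      rw [intervalIntegral.integral_deriv_mul_eq_sub_of_hasDerivWithinAt (by rw [hI]; exact hG)
        (by rw [hI]; exact fun t ht => (hη.differentiableOn one_ne_zero t ht).hasDerivWithinAt)
        (hint hg) (hint hη'), hηa, hηb]
      ring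
    calc ∫ t in a..b, (h t - G t) * derivWithin η (Icc a b) t
        = ∫ t in a..b, ((g t * η t + h t * derivWithin η (Icc a b) t)
            - (g t * η t + G t * derivWithin η (Icc a b) t)) :=
          intervalIntegral.integral_congr fun t _ => by ring
      _ = 0 := by
        rw [intervalIntegral.integral_sub ?_ ?_, hvar η hη hηa hηb, hparts, sub_zero]
        · exact hint ((hg.mul hη.continuousOn).add (hh.mul hη'))
        · exact hint ((hg.mul hη.continuousOn).add (hGc.mul hη'))
  obtain ⟨K, hK⟩ := exists_eqOn_const_of_integral_mul_derivWithin_eq_zero hab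
    (h := fun t => h t - G t) (hh.sub hGc) hvar'
  intro t ht
  exact ((hG t ht).add_const K).congr (fun s hs => by linarith [hK hs]) (by linarith [hK ht])

theorem C1Norm_const_mul (a b c : ℝ) (x : ℝ → ℝ) :
    C1Norm a b (fun t => c * x t) = |c| * C1Norm a b x := by
  simp only [C1Norm, derivWithin_const_mul_field, abs_mul,
    ← Real.mul_iSup_of_nonneg (abs_nonneg c), mul_add]

theorem eventually_nhds_zero_of_C1Norm_sub_lt {a b xa xb : ℝ} {x₀ η : ℝ → ℝ}
    {P : (ℝ → ℝ) → Prop}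
    (hP : ∃ δ > 0, ∀ x : ℝ → ℝ, ContDiffOn ℝ 1 x (Icc a b) → x a = xa → x b = xb →
      C1Norm a b (fun t => x t - x₀ t) < δ → P x)
    (hx₀ : ContDiffOn ℝ 1 x₀ (Icc a b)) (hx₀a : x₀ a = xa) (hx₀b : x₀ b = xb)
    (hη : ContDiffOn ℝ 1 η (Icc a b)) (hηa : η a = 0) (hηb : η b = 0) :
    ∀ᶠ ε in 𝓝 0, P (fun t => x₀ t + ε * η t) := by
  obtain ⟨δ, hδ, hP⟩ := hP
  have hsmall : Tendsto (fun ε : ℝ => |ε| * C1Norm a b η) (𝓝 0) (𝓝 0) := by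
    have hcont : Continuous fun ε : ℝ => |ε| * C1Norm a b η := by fun_prop
    exact hcont.tendsto' 0 0 (by simp)
  filter_upwards [hsmall.eventually (gt_mem_nhds hδ)] with ε hε
  refine hP _ (hx₀.add (contDiffOn_const.mul hη)) (by simp [hx₀a, hηa]) (by simp [hx₀b, hηb]) ?_
  simpa [C1Norm_const_mul] using hε

theorem isLocalExtr_add_mul_of_C1Norm_sub_lt {a b xa xb : ℝ} {J : (ℝ → ℝ) → ℝ} {x₀ η : ℝ → ℝ}
    (hext :
      (∃ δ > 0, ∀ x : ℝ → ℝ, ContDiffOn ℝ 1 x (Icc a b) →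
        x a = xa → x b = xb → C1Norm a b (fun t => x t - x₀ t) < δ → J x₀ ≤ J x) ∨
      (∃ δ > 0, ∀ x : ℝ → ℝ, ContDiffOn ℝ 1 x (Icc a b) →
        x a = xa → x b = xb → C1Norm a b (fun t => x t - x₀ t) < δ → J x ≤ J x₀))
    (hx₀ : ContDiffOn ℝ 1 x₀ (Icc a b)) (hx₀a : x₀ a = xa) (hx₀b : x₀ b = xb)
    (hη : ContDiffOn ℝ 1 η (Icc a b)) (hηa : η a = 0) (hηb : η b = 0) :
    IsLocalExtr (fun ε => J (fun t => x₀ t + ε * η t)) 0 := by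
  rcases hext with hmin | hmax
  · exact .inl <| (eventually_nhds_zero_of_C1Norm_sub_lt hmin hx₀ hx₀a hx₀b hη hηa hηb).mono
      fun ε hε => by simpa using hε
  · exact .inr <| (eventually_nhds_zero_of_C1Norm_sub_lt hmax hx₀ hx₀a hx₀b hη hηa hηb).mono
      fun ε hε => by simpa using hε

structure IsRegularLagrangian (a b : ℝ) (f fy fv : ℝ → ℝ → ℝ → ℝ) : Prop where
  continuousOn : ContinuousOn (fun p : ℝ × ℝ × ℝ => f p.1 p.2.1 p.2.2) (Icc a b ×ˢ univ ×ˢ univ)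
  hasDerivAt_y : ∀ t ∈ Icc a b, ∀ y v, HasDerivAt (fun y' => f t y' v) (fy t y v) y
  hasDerivAt_v : ∀ t ∈ Icc a b, ∀ y v, HasDerivAt (fun v' => f t y v') (fv t y v) v
  continuousOn_fy :
    ContinuousOn (fun p : ℝ × ℝ × ℝ => fy p.1 p.2.1 p.2.2) (Icc a b ×ˢ univ ×ˢ univ)
  continuousOn_fv :
    ContinuousOn (fun p : ℝ × ℝ × ℝ => fv p.1 p.2.1 p.2.2) (Icc a b ×ˢ univ ×ˢ univ)

theorem ContinuousOn.comp_prodMk_Icc {a b : ℝ} {G : ℝ × ℝ × ℝ → ℝ}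
    (hG : ContinuousOn G (Icc a b ×ˢ univ ×ˢ univ)) {x x' : ℝ → ℝ}
    (hx : ContinuousOn x (Icc a b)) (hx' : ContinuousOn x' (Icc a b)) :
    ContinuousOn (fun t => G (t, x t, x' t)) (Icc a b) :=
  hG.comp (continuousOn_id.prodMk (hx.prodMk hx')) fun _ ht => ⟨ht, trivial, trivial⟩

theorem IsRegularLagrangian.hasDerivAt_integral_add_mul {a b : ℝ} {f fy fv : ℝ → ℝ → ℝ → ℝ}
    (hf : IsRegularLagrangian a b f fy fv) (hab : a ≤ b) {x x' η η' : ℝ → ℝ}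
    (hx : ContinuousOn x (Icc a b)) (hx' : ContinuousOn x' (Icc a b))
    (hη : ContinuousOn η (Icc a b)) (hη' : ContinuousOn η' (Icc a b)) :
    HasDerivAt (fun ε => ∫ t in a..b, f t (x t + ε * η t) (x' t + ε * η' t))
      (∫ t in a..b, (fy t (x t) (x' t) * η t + fv t (x t) (x' t) * η' t)) 0 := by
  obtain ⟨hf_cont, hfy, hfv, hfy_cont, hfv_cont⟩ := hf
  rw [← uIcc_of_le hab] at *
  set γ : ℝ × ℝ → ℝ × ℝ × ℝ := fun p => (p.2, x p.2 + p.1 * η p.2, x' p.2 + p.1 * η' p.2)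
  have hsnd : MapsTo Prod.snd (Metric.closedBall (0 : ℝ) 1 ×ˢ [[a, b]]) [[a, b]] :=
    fun _ hp => hp.2
  have hγ : ContinuousOn γ (Metric.closedBall 0 1 ×ˢ [[a, b]]) :=
    continuousOn_snd.prodMk <|
      ((hx.comp continuousOn_snd hsnd).add
        (continuousOn_fst.mul (hη.comp continuousOn_snd hsnd))).prodMk
      ((hx'.comp continuousOn_snd hsnd).add
        (continuousOn_fst.mul (hη'.comp continuousOn_snd hsnd)))
  have hγ_comp : ∀ {g : ℝ → ℝ → ℝ → ℝ},
      ContinuousOn (fun p : ℝ × ℝ × ℝ => g p.1 p.2.1 p.2.2) ([[a, b]] ×ˢ univ ×ˢ univ) →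
      ContinuousOn (fun p => g (γ p).1 (γ p).2.1 (γ p).2.2) (Metric.closedBall 0 1 ×ˢ [[a, b]]) :=
    fun hg => hg.comp hγ fun _ hp => ⟨hp.2, trivial, trivial⟩
  have hslice : ∀ {g : ℝ → ℝ → ℝ → ℝ},
      ContinuousOn (fun p : ℝ × ℝ × ℝ => g p.1 p.2.1 p.2.2) ([[a, b]] ×ˢ univ ×ˢ univ) →
      ∀ t ∈ [[a, b]], Continuous (uncurry (g t)) := fun hg t ht =>
    hg.comp_continuous (f := fun q : ℝ × ℝ => (t, q.1, q.2)) (by fun_prop)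
      fun _ => ⟨ht, trivial, trivial⟩
  have hderiv := hasDerivAt_intervalIntegral_of_continuousOn one_pos
    (F := fun ε t => f t (x t + ε * η t) (x' t + ε * η' t))
    (F' := fun ε t => fy t (x t + ε * η t) (x' t + ε * η' t) * η t
      + fv t (x t + ε * η t) (x' t + ε * η' t) * η' t) (ε₀ := 0)
    (hγ_comp hf_cont)
    (((hγ_comp hfy_cont).mul (hη.comp continuousOn_snd hsnd)).add
      ((hγ_comp hfv_cont).mul (hη'.comp continuousOn_snd hsnd)))
    fun t ht ε _ => hasDerivAt_comp_of_continuous_partials (hfy t ht) (hfv t ht)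
      (hslice hfy_cont t ht) (hslice hfv_cont t ht)
      ((hasDerivAt_mul_const _).const_add _) ((hasDerivAt_mul_const _).const_add _)
  simpa using hderiv

section CompositeFunctional

variable {a b : ℝ} {n : ℕ} {f fy fv : Fin n → ℝ → ℝ → ℝ → ℝ} {F : (ℝ → ℝ) → Fin n → ℝ}

theorem hasDerivAt_functional_add_mul (hab : a < b)
    (hf : ∀ i, IsRegularLagrangian a b (f i) (fy i) (fv i))
    (hF : ∀ x i, F x i = ∫ t in a..b, f i t (x t) (derivWithin x (Icc a b) t))
    {x η : ℝ → ℝ} (hx : ContDiffOn ℝ 1 x (Icc a b)) (hη : ContDiffOn ℝ 1 η (Icc a b)) :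
    HasDerivAt (fun ε => F (fun t => x t + ε * η t))
      (fun i => ∫ t in a..b, (fy i t (x t) (derivWithin x (Icc a b) t) * η t
        + fv i t (x t) (derivWithin x (Icc a b) t) * derivWithin η (Icc a b) t)) 0 := by
  have hderiv : ∀ ε, EqOn (derivWithin (fun t => x t + ε * η t) (Icc a b))
      (fun t => derivWithin x (Icc a b) t + ε * derivWithin η (Icc a b) t) [[a, b]] := by
    intro ε t ht
    rw [uIcc_of_le hab.le] at ht
    exact ((hx.differentiableOn one_ne_zero t ht).hasDerivWithinAt.add
      ((hη.differentiableOn one_ne_zero t ht).hasDerivWithinAt.const_mul ε)).derivWithin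
      (uniqueDiffOn_Icc hab t ht)
  refine hasDerivAt_pi.2 fun i => ?_
  simp only [hF]
  have hFε : (fun ε => ∫ t in a..b, f i t (x t + ε * η t)
      (derivWithin (fun t => x t + ε * η t) (Icc a b) t)) =
      fun ε => ∫ t in a..b, f i t (x t + ε * η t)
        (derivWithin x (Icc a b) t + ε * derivWithin η (Icc a b) t) :=
    funext fun ε => intervalIntegral.integral_congr fun t ht => by simp only [hderiv ε ht]
  rw [hFε]
  exact (hf i).hasDerivAt_integral_add_mul hab.le hx.continuousOn
    (hx.continuousOn_derivWithin (uniqueDiffOn_Icc hab) le_rfl) hη.continuousOn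
    (hη.continuousOn_derivWithin (uniqueDiffOn_Icc hab) le_rfl)

theorem hasDerivAt_comp_functional_add_mul (hab : a < b)
    (hf : ∀ i, IsRegularLagrangian a b (f i) (fy i) (fv i))
    (hF : ∀ x i, F x i = ∫ t in a..b, f i t (x t) (derivWithin x (Icc a b) t))
    {H : (Fin n → ℝ) → ℝ} {x η : ℝ → ℝ} (hH : DifferentiableAt ℝ H (F x))
    (hx : ContDiffOn ℝ 1 x (Icc a b)) (hη : ContDiffOn ℝ 1 η (Icc a b)) :
    HasDerivAt (fun ε => H (F (fun t => x t + ε * η t)))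
      (∫ t in a..b,
        ((∑ i, fderiv ℝ H (F x) (Pi.single i 1) * fy i t (x t) (derivWithin x (Icc a b) t)) * η t
        + (∑ i, fderiv ℝ H (F x) (Pi.single i 1) * fv i t (x t) (derivWithin x (Icc a b) t))
          * derivWithin η (Icc a b) t)) 0 := by
  have hx' := hx.continuousOn_derivWithin (uniqueDiffOn_Icc hab) le_rfl
  have hη' := hη.continuousOn_derivWithin (uniqueDiffOn_Icc hab) le_rfl
  have hlin : ∀ A : Fin n → ℝ,
      fderiv ℝ H (F x) A = ∑ i, A i * fderiv ℝ H (F x) (Pi.single i 1) := fun A => by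
    conv_lhs => rw [pi_eq_sum_univ' A]
    simp [map_sum]
  refine (hH.hasFDerivAt.comp_hasDerivAt_of_eq 0 (hasDerivAt_functional_add_mul hab hf hF hx hη)
    (by simp)).congr_deriv ?_
  rw [hlin]
  simp only [← intervalIntegral.integral_mul_const]
  rw [← intervalIntegral.integral_finsetSum]
  · refine intervalIntegral.integral_congr fun t _ => ?_
    simp only [Finset.sum_mul, ← Finset.sum_add_distrib]
    exact Finset.sum_congr rfl fun i _ => by ring
  · intro i _
    exact ((((hf i).continuousOn_fy.comp_prodMk_Icc hx.continuousOn hx').mul hη.continuousOn).add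
      (((hf i).continuousOn_fv.comp_prodMk_Icc hx.continuousOn hx').mul hη')).mul
      continuousOn_const |>.intervalIntegrable_of_Icc hab.le

end CompositeFunctional

theorem composite_euler_lagrange_general
    (a b : ℝ) (hab : a < b) (n : ℕ)
    (H : (Fin n → ℝ) → ℝ) (hH : ContDiff ℝ 1 H)
    (f fy fv : Fin n → ℝ → ℝ → ℝ → ℝ)
    (hf_cont : ∀ i, ContinuousOn (fun p : ℝ × ℝ × ℝ => f i p.1 p.2.1 p.2.2)
      (Set.Icc a b ×ˢ (Set.univ : Set ℝ) ×ˢ (Set.univ : Set ℝ)))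
    (hfy : ∀ i, ∀ t ∈ Set.Icc a b, ∀ y v : ℝ,
      HasDerivAt (fun y' => f i t y' v) (fy i t y v) y)
    (hfv : ∀ i, ∀ t ∈ Set.Icc a b, ∀ y v : ℝ,
      HasDerivAt (fun v' => f i t y v') (fv i t y v) v)
    (hfy_cont : ∀ i, ContinuousOn (fun p : ℝ × ℝ × ℝ => fy i p.1 p.2.1 p.2.2)
      (Set.Icc a b ×ˢ (Set.univ : Set ℝ) ×ˢ (Set.univ : Set ℝ)))
    (hfv_cont : ∀ i, ContinuousOn (fun p : ℝ × ℝ × ℝ => fv i p.1 p.2.1 p.2.2)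
      (Set.Icc a b ×ˢ (Set.univ : Set ℝ) ×ˢ (Set.univ : Set ℝ)))
    (xa xb : ℝ) (xE : ℝ → ℝ)
    (hxE : ContDiffOn ℝ 1 xE (Set.Icc a b))
    (hxEa : xE a = xa) (hxEb : xE b = xb)
    (hdiff : ∀ i, ∀ t ∈ Set.Icc a b,
      DifferentiableWithinAt ℝ
        (fun s => fv i s (xE s) (derivWithin xE (Set.Icc a b) s)) (Set.Icc a b) t)
    (F : (ℝ → ℝ) → Fin n → ℝ)
    (hF : ∀ x i, F x i = ∫ t in a..b, f i t (x t) (derivWithin x (Set.Icc a b) t))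
    (L : (ℝ → ℝ) → ℝ)
    (hL : ∀ x, L x = H (F x))
    (hext :
      (∃ δ > 0, ∀ x : ℝ → ℝ, ContDiffOn ℝ 1 x (Set.Icc a b) →
        x a = xa → x b = xb → C1Norm a b (fun t => x t - xE t) < δ → L xE ≤ L x) ∨
      (∃ δ > 0, ∀ x : ℝ → ℝ, ContDiffOn ℝ 1 x (Set.Icc a b) →
        x a = xa → x b = xb → C1Norm a b (fun t => x t - xE t) < δ → L x ≤ L xE)) :
    ∀ t ∈ Set.Icc a b,
      ∑ i, fderiv ℝ H (F xE) (Pi.single i 1) *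
        (fy i t (xE t) (derivWithin xE (Set.Icc a b) t) -
          derivWithin (fun s => fv i s (xE s) (derivWithin xE (Set.Icc a b) s))
            (Set.Icc a b) t) = 0 := by
  intro t ht
  have hf : ∀ i, IsRegularLagrangian a b (f i) (fy i) (fv i) :=
    fun i => ⟨hf_cont i, hfy i, hfv i, hfy_cont i, hfv_cont i⟩
  set c : Fin n → ℝ := fun i => fderiv ℝ H (F xE) (Pi.single i 1)
  have hvar : ∀ η : ℝ → ℝ, ContDiffOn ℝ 1 η (Icc a b) → η a = 0 → η b = 0 →
      ∫ s in a..b, ((∑ i, c i * fy i s (xE s) (derivWithin xE (Icc a b) s)) * η s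
        + (∑ i, c i * fv i s (xE s) (derivWithin xE (Icc a b) s)) * derivWithin η (Icc a b) s)
        = 0 := fun η hη hηa hηb => by
    have hextr := isLocalExtr_add_mul_of_C1Norm_sub_lt hext hxE hxEa hxEb hη hηa hηb
    simp only [hL] at hextr
    exact hextr.hasDerivAt_eq_zero (hasDerivAt_comp_functional_add_mul hab hf hF
      (hH.differentiable one_ne_zero _) hxE hη)
  have hxE' := hxE.continuousOn_derivWithin (uniqueDiffOn_Icc hab) le_rfl
  have hEL := hasDerivWithinAt_of_integral_variation_eq_zero hab
    ((continuousOn_finsetSum _ fun i _ => continuousOn_const.mul (hfy_cont i)).comp_prodMk_Icc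
      hxE.continuousOn hxE')
    ((continuousOn_finsetSum _ fun i _ => continuousOn_const.mul (hfv_cont i)).comp_prodMk_Icc
      hxE.continuousOn hxE') hvar t ht
  have hsum := HasDerivWithinAt.fun_sum (u := Finset.univ) fun i _ =>
    (hdiff i t ht).hasDerivWithinAt.const_mul (c i)
  have heq := (hEL.derivWithin (uniqueDiffOn_Icc hab t ht)).symm.trans
    (hsum.derivWithin (uniqueDiffOn_Icc hab t ht))
  simp only [mul_sub, Finset.sum_sub_distrib]
  exact sub_eq_zero.2 heq

/-- Euler–Lagrange equation for the composite functional
`L[x] = H(F₁[x], …, F_n[x])` with both endpoints fixed. -/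
theorem composite_euler_lagrange
    (a b : ℝ) (hab : a < b) (n : ℕ) (hn : 1 ≤ n)
    (H : (Fin n → ℝ) → ℝ) (hH : ContDiff ℝ 1 H)
    (f fy fv : Fin n → ℝ → ℝ → ℝ → ℝ)
    (hf_cont : ∀ i, ContinuousOn (fun p : ℝ × ℝ × ℝ => f i p.1 p.2.1 p.2.2)
      (Set.Icc a b ×ˢ (Set.univ : Set ℝ) ×ˢ (Set.univ : Set ℝ)))
    (hfy : ∀ i, ∀ t ∈ Set.Icc a b, ∀ y v : ℝ,
      HasDerivAt (fun y' => f i t y' v) (fy i t y v) y)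
    (hfv : ∀ i, ∀ t ∈ Set.Icc a b, ∀ y v : ℝ,
      HasDerivAt (fun v' => f i t y v') (fv i t y v) v)
    (hfy_cont : ∀ i, ContinuousOn (fun p : ℝ × ℝ × ℝ => fy i p.1 p.2.1 p.2.2)
      (Set.Icc a b ×ˢ (Set.univ : Set ℝ) ×ˢ (Set.univ : Set ℝ)))
    (hfv_cont : ∀ i, ContinuousOn (fun p : ℝ × ℝ × ℝ => fv i p.1 p.2.1 p.2.2)
      (Set.Icc a b ×ˢ (Set.univ : Set ℝ) ×ˢ (Set.univ : Set ℝ)))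
    (xa xb : ℝ) (xE : ℝ → ℝ)
    (hxE : ContDiffOn ℝ 1 xE (Set.Icc a b))
    (hxEa : xE a = xa) (hxEb : xE b = xb)
    (hdiff : ∀ i, ∀ t ∈ Set.Icc a b,
      DifferentiableWithinAt ℝ
        (fun s => fv i s (xE s) (derivWithin xE (Set.Icc a b) s)) (Set.Icc a b) t)
    (F : (ℝ → ℝ) → Fin n → ℝ)
    (hF : ∀ x i, F x i = ∫ t in a..b, f i t (x t) (derivWithin x (Set.Icc a b) t))
    (L : (ℝ → ℝ) → ℝ)
    (hL : ∀ x, L x = H (F x))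
    (hext :
      (∃ δ > 0, ∀ x : ℝ → ℝ, ContDiffOn ℝ 1 x (Set.Icc a b) →
        x a = xa → x b = xb → C1Norm a b (fun t => x t - xE t) < δ → L xE ≤ L x) ∨
      (∃ δ > 0, ∀ x : ℝ → ℝ, ContDiffOn ℝ 1 x (Set.Icc a b) →
        x a = xa → x b = xb → C1Norm a b (fun t => x t - xE t) < δ → L x ≤ L xE)) :
    ∀ t ∈ Set.Icc a b,
      ∑ i, fderiv ℝ H (F xE) (Pi.single i 1) *
        (fy i t (xE t) (derivWithin xE (Set.Icc a b) t) -
          derivWithin (fun s => fv i s (xE s) (derivWithin xE (Set.Icc a b) s))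
            (Set.Icc a b) t) = 0 :=
  composite_euler_lagrange_general a b hab n H hH f fy fv hf_cont hfy hfv hfy_cont hfv_cont xa xb xE
    hxE hxEa hxEb hdiff F hF L hL hext
end

section
/- Let a < b be real numbers and let f_1, f_2 : [a,b] × ℝ × ℝ → ℝ be continuous with continuous partial derivatives f_{1y}, f_{1v}, f_{2y}, f_{2v} with respect to their second and third arguments. Suppose x̃ : [a,b] → ℝ is C¹ with x̃(b) = x_b (the value x(a) is not specified), that F_2[x] ≠ 0 for every C¹ function x with x(b) = x_b, and that x̃ is a weak local extremizer of the quotient functional L[x] = F_1[x] / F_2[x] among such admissible functions: there exists δ > 0 such that L[x̃] ≤ L[x] for every admissible x with ‖x − x̃‖₁ < δ (or L[x̃] ≥ L[x] for all such x). Then, with Q = F_1[x̃] / F_2[x̃], the natural boundary condition f_{1v}(a, x̃(a), x̃'(a)) − Q · f_{2v}(a, x̃(a), x̃'(a)) = 0 holds. -/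
open Set Filter Topology intervalIntegral

theorem ContinuousOn.comp_triple {X : Type*} [TopologicalSpace X] {I : Set ℝ} {s : Set X}
    {g : ℝ → ℝ → ℝ → ℝ}
    (hg : ContinuousOn (fun p : ℝ × ℝ × ℝ => g p.1 p.2.1 p.2.2) (I ×ˢ univ ×ˢ univ))
    {τ u w : X → ℝ} (hτ : ContinuousOn τ s) (hτI : MapsTo τ s I) (hu : ContinuousOn u s)
    (hw : ContinuousOn w s) : ContinuousOn (fun x => g (τ x) (u x) (w x)) s :=
  hg.comp (hτ.prodMk (hu.prodMk hw)) fun _ hx => ⟨hτI hx, trivial, trivial⟩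

theorem ContinuousOn.comp_jet {a b : ℝ} {g : ℝ → ℝ → ℝ → ℝ}
    (hg : ContinuousOn (fun p : ℝ × ℝ × ℝ => g p.1 p.2.1 p.2.2) (Icc a b ×ˢ univ ×ˢ univ))
    (hab : a < b) {x : ℝ → ℝ} (hx : ContDiffOn ℝ 1 x (Icc a b)) :
    ContinuousOn (fun t => g t (x t) (derivWithin x (Icc a b) t)) (Icc a b) :=
  hg.comp_triple continuousOn_id (fun _ ht => ht) hx.continuousOn
    (hx.continuousOn_derivWithin (uniqueDiffOn_Icc hab) le_rfl)

theorem HasDerivAt.comp_of_continuousAt_partials {f fy fv : ℝ → ℝ → ℝ} {y v : ℝ → ℝ}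
    {y' v' s : ℝ}
    (hfy : ∀ᶠ p in 𝓝 (y s, v s), HasDerivAt (f · p.2) (fy p.1 p.2) p.1)
    (hfv : ∀ᶠ p in 𝓝 (y s, v s), HasDerivAt (f p.1 ·) (fv p.1 p.2) p.2)
    (hfy_cont : ContinuousAt (Function.uncurry fy) (y s, v s))
    (hfv_cont : ContinuousAt (Function.uncurry fv) (y s, v s))
    (hy : HasDerivAt y y' s) (hv : HasDerivAt v v' s) :
    HasDerivAt (fun s => f (y s) (v s)) (fy (y s) (v s) * y' + fv (y s) (v s) * v') s := by
  have hsmul : ∀ {g : ℝ × ℝ → ℝ} {p : ℝ × ℝ}, ContinuousAt g p →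
      ContinuousAt (fun q => ContinuousLinearMap.smulRight (1 : ℝ →L[ℝ] ℝ) (g q)) p :=
    fun hg => (ContinuousLinearMap.smulRightL ℝ ℝ ℝ 1).continuous.continuousAt.comp hg
  have hf := hasStrictFDerivAt_uncurry_coprod (f := f)
    (f₁ := fun y v => (1 : ℝ →L[ℝ] ℝ).smulRight (fy y v))
    (f₂ := fun y v => (1 : ℝ →L[ℝ] ℝ).smulRight (fv y v)) hfy hfv
    (hsmul hfy_cont) (hsmul hfv_cont)
  refine (hf.hasFDerivAt.comp_hasDerivAt s (hy.prodMk hv)).congr_deriv ?_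
  simp [Function.HasUncurry.uncurry, mul_comm]

structure IsC1Lagrangian (a b : ℝ) (f fy fv : ℝ → ℝ → ℝ → ℝ) : Prop where
  continuousOn : ContinuousOn (fun p : ℝ × ℝ × ℝ => f p.1 p.2.1 p.2.2) (Icc a b ×ˢ univ ×ˢ univ)
  hasDerivAt_y : ∀ t ∈ Icc a b, ∀ y v : ℝ, HasDerivAt (fun y' => f t y' v) (fy t y v) y
  hasDerivAt_v : ∀ t ∈ Icc a b, ∀ y v : ℝ, HasDerivAt (fun v' => f t y v') (fv t y v) v
  continuousOn_y :
    ContinuousOn (fun p : ℝ × ℝ × ℝ => fy p.1 p.2.1 p.2.2) (Icc a b ×ˢ univ ×ˢ univ)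
  continuousOn_v :
    ContinuousOn (fun p : ℝ × ℝ × ℝ => fv p.1 p.2.1 p.2.2) (Icc a b ×ˢ univ ×ˢ univ)

noncomputable def variationalIntegral (a b : ℝ) (f : ℝ → ℝ → ℝ → ℝ) (x : ℝ → ℝ) : ℝ :=
  ∫ t in a..b, f t (x t) (derivWithin x (Icc a b) t)

namespace IsC1Lagrangian

variable {a b : ℝ} {f fy fv : ℝ → ℝ → ℝ → ℝ}

theorem hasDerivAt_along_line (hf : IsC1Lagrangian a b f fy fv) {t : ℝ} (ht : t ∈ Icc a b)
    (y₀ v₀ c d ε : ℝ) :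
    HasDerivAt (fun ε => f t (y₀ + ε * c) (v₀ + ε * d))
      (fy t (y₀ + ε * c) (v₀ + ε * d) * c + fv t (y₀ + ε * c) (v₀ + ε * d) * d) ε := by
  have hslice : ∀ {g : ℝ → ℝ → ℝ → ℝ},
      ContinuousOn (fun p : ℝ × ℝ × ℝ => g p.1 p.2.1 p.2.2) (Icc a b ×ˢ univ ×ˢ univ) →
      Continuous (Function.uncurry (g t)) := fun hg =>
    continuousOn_univ.mp <| hg.comp_triple continuousOn_const (fun _ _ => ht)
      continuousOn_fst continuousOn_snd
  exact HasDerivAt.comp_of_continuousAt_partials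
    (.of_forall fun p => hf.hasDerivAt_y t ht p.1 p.2)
    (.of_forall fun p => hf.hasDerivAt_v t ht p.1 p.2)
    (hslice hf.continuousOn_y).continuousAt (hslice hf.continuousOn_v).continuousAt
    (by simpa using ((hasDerivAt_id ε).mul_const c).const_add y₀)
    (by simpa using ((hasDerivAt_id ε).mul_const d).const_add v₀)

theorem hasDerivAt_integral_add_mul (hf : IsC1Lagrangian a b f fy fv) (hab : a ≤ b)
    {u w η ζ : ℝ → ℝ} (hu : ContinuousOn u (Icc a b)) (hw : ContinuousOn w (Icc a b))
    (hη : ContinuousOn η (Icc a b)) (hζ : ContinuousOn ζ (Icc a b)) :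
    HasDerivAt (fun ε => ∫ t in a..b, f t (u t + ε * η t) (w t + ε * ζ t))
      (∫ t in a..b, fy t (u t) (w t) * η t + fv t (u t) (w t) * ζ t) 0 := by
  set F' : ℝ → ℝ → ℝ := fun ε t => fy t (u t + ε * η t) (w t + ε * ζ t) * η t
    + fv t (u t + ε * η t) (w t + ε * ζ t) * ζ t
  have hIoc : uIoc a b ⊆ Icc a b := by rw [uIoc_of_le hab]; exact Ioc_subset_Icc_self
  have hline : ∀ ε : ℝ, ContinuousOn (fun t => u t + ε * η t) (Icc a b) ∧
      ContinuousOn (fun t => w t + ε * ζ t) (Icc a b) := fun ε =>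
    ⟨hu.add (continuousOn_const.mul hη), hw.add (continuousOn_const.mul hζ)⟩
  have hFc : ∀ ε, ContinuousOn (fun t => f t (u t + ε * η t) (w t + ε * ζ t)) (Icc a b) :=
    fun ε => hf.continuousOn.comp_triple continuousOn_id (fun _ ht => ht) (hline ε).1 (hline ε).2
  have hF'c : ∀ ε, ContinuousOn (F' ε) (Icc a b) := fun ε =>
    ((hf.continuousOn_y.comp_triple continuousOn_id (fun _ ht => ht) (hline ε).1
      (hline ε).2).mul hη).add
    ((hf.continuousOn_v.comp_triple continuousOn_id (fun _ ht => ht) (hline ε).1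
      (hline ε).2).mul hζ)
  obtain ⟨C, hC⟩ : ∃ C, ∀ q ∈ Icc a b ×ˢ Icc (-1 : ℝ) 1, ‖F' q.2 q.1‖ ≤ C := by
    refine (isCompact_Icc.prod isCompact_Icc).exists_bound_of_continuousOn ?_
    have hfst : MapsTo Prod.fst (Icc a b ×ˢ Icc (-1 : ℝ) 1) (Icc a b) := fun _ hq => hq.1
    have hη₁ := hη.comp continuousOn_fst hfst
    have hζ₁ := hζ.comp continuousOn_fst hfst
    have hy := (hu.comp continuousOn_fst hfst).add (continuousOn_snd.mul hη₁)
    have hv := (hw.comp continuousOn_fst hfst).add (continuousOn_snd.mul hζ₁)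
    exact ((hf.continuousOn_y.comp_triple continuousOn_fst hfst hy hv).mul hη₁).add
      ((hf.continuousOn_v.comp_triple continuousOn_fst hfst hy hv).mul hζ₁)
  have key := intervalIntegral.hasDerivAt_integral_of_dominated_loc_of_deriv_le
    (F := fun ε t => f t (u t + ε * η t) (w t + ε * ζ t)) (F' := F') (x₀ := 0)
    (bound := fun _ => C) (μ := MeasureTheory.volume) (Metric.ball_mem_nhds 0 one_pos)
    (.of_forall fun ε => ((hFc ε).mono hIoc).aestronglyMeasurable measurableSet_uIoc)
    ((hFc 0).intervalIntegrable_of_Icc hab)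
    (((hF'c 0).mono hIoc).aestronglyMeasurable measurableSet_uIoc)
    (.of_forall fun t ht ε hε => hC (t, ε) ⟨hIoc ht, by
      simpa [abs_le] using (mem_ball_zero_iff.mp hε).le⟩)
    intervalIntegrable_const
    (.of_forall fun t ht ε _ => hf.hasDerivAt_along_line (hIoc ht) _ _ _ _ ε)
  simpa [F'] using key.2

theorem hasDerivAt_variationalIntegral_add_mul (hf : IsC1Lagrangian a b f fy fv) (hab : a < b)
    {x η : ℝ → ℝ} (hx : ContDiffOn ℝ 1 x (Icc a b)) (hη : ContDiff ℝ 1 η) :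
    HasDerivAt (fun ε => variationalIntegral a b f fun t => x t + ε * η t)
      (∫ t in a..b, fy t (x t) (derivWithin x (Icc a b) t) * η t
        + fv t (x t) (derivWithin x (Icc a b) t) * deriv η t) 0 := by
  have hsU := uniqueDiffOn_Icc hab
  have hderiv : ∀ ε, ∀ t ∈ Icc a b, derivWithin (fun t => x t + ε * η t) (Icc a b) t
      = derivWithin x (Icc a b) t + ε * deriv η t := fun ε t ht =>
    ((hx.differentiableOn one_ne_zero t ht).hasDerivWithinAt.add
      ((hη.differentiable one_ne_zero t).hasDerivAt.const_mul ε).hasDerivWithinAt).derivWithin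
      (hsU t ht)
  refine (hf.hasDerivAt_integral_add_mul hab.le hx.continuousOn
    (hx.continuousOn_derivWithin hsU le_rfl) hη.continuous.continuousOn
    (hη.continuous_deriv le_rfl).continuousOn).congr_of_eventuallyEq
    (.of_forall fun ε => integral_congr fun t ht => ?_)
  rw [uIcc_of_le hab.le] at ht
  simp only [hderiv ε t ht]

end IsC1Lagrangian

theorem eqOn_zero_of_integral_sq_eq_zero {a b : ℝ} {g : ℝ → ℝ} (hab : a < b)
    (hg : ContinuousOn g (Icc a b)) (h : ∫ t in a..b, g t ^ 2 = 0) : EqOn g 0 (Icc a b) := by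
  intro c hc
  by_contra hne
  have := integral_pos (f := fun t => g t ^ 2) hab (hg.pow 2) (fun t _ => sq_nonneg (g t))
    ⟨c, hc, sq_pos_of_ne_zero hne⟩
  linarith

theorem eq_integral_of_forall_integral_mul_add_mul_deriv_eq_zero {a b : ℝ} {α β : ℝ → ℝ}
    (hab : a < b) (hα : ContinuousOn α (Icc a b)) (hβ : ContinuousOn β (Icc a b))
    (H : ∀ η : ℝ → ℝ, ContDiff ℝ 1 η → η b = 0 → ∫ t in a..b, α t * η t + β t * deriv η t = 0) :
    ∀ t ∈ Icc a b, β t = ∫ s in a..t, α s := by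
  set α' := IccExtend hab.le fun t : Icc a b => α t
  set β' := IccExtend hab.le fun t : Icc a b => β t
  have hα' : Continuous α' := continuous_IccExtend_iff.mpr hα.domRestrict
  have hβ' : Continuous β' := continuous_IccExtend_iff.mpr hβ.domRestrict
  have hαα' : EqOn α' α (Icc a b) := fun t ht => IccExtend_of_mem hab.le _ ht
  have hββ' : EqOn β' β (Icc a b) := fun t ht => IccExtend_of_mem hab.le _ ht
  set A := fun t => ∫ s in a..t, α' s
  have hA : ∀ t, HasDerivAt A (α' t) t := fun t => (hα'.integral_hasStrictDerivAt a t).hasDerivAt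
  have hAc : Continuous A := continuous_iff_continuousAt.mpr fun t => (hA t).continuousAt
  set φ := fun t => β' t - A t
  have hφ : Continuous φ := hβ'.sub hAc
  set η := fun t => ∫ s in b..t, φ s
  have hη : ∀ t, HasDerivAt η (φ t) t := fun t => (hφ.integral_hasStrictDerivAt b t).hasDerivAt
  have hη' : deriv η = φ := funext fun t => (hη t).deriv
  have hηC : ContDiff ℝ 1 η :=
    contDiff_one_iff_deriv.mpr ⟨fun t => (hη t).differentiableAt, hη' ▸ hφ⟩
  have hηc : Continuous η := hηC.continuous
  have hvar : ∫ t in a..b, α' t * η t + β' t * φ t = 0 := by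
    rw [← H η hηC (integral_same), hη']
    refine integral_congr fun t ht => ?_
    rw [uIcc_of_le hab.le] at ht
    simp only [hαα' ht, hββ' ht]
  have hparts : ∫ t in a..b, α' t * η t + A t * φ t = 0 := by
    rw [integral_eq_sub_of_hasDerivAt (fun t _ => (hA t).mul (hη t))
      (Continuous.intervalIntegrable (by fun_prop) a b)]
    simp [A, η]
  have hsq : ∫ t in a..b, φ t ^ 2 = 0 := by
    calc ∫ t in a..b, φ t ^ 2
        = (∫ t in a..b, α' t * η t + β' t * φ t) - ∫ t in a..b, α' t * η t + A t * φ t := by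
          rw [← integral_sub (Continuous.intervalIntegrable (by fun_prop) a b)
            (Continuous.intervalIntegrable (by fun_prop) a b)]
          congr 1 with t
          simp only [φ]
          ring
      _ = 0 := by rw [hvar, hparts, sub_zero]
  intro t ht
  have hφt := eqOn_zero_of_integral_sq_eq_zero hab hφ.continuousOn hsq ht
  rw [← hββ' ht, eq_of_sub_eq_zero hφt]
  refine integral_congr fun s hs => hαα' ?_
  rw [uIcc_of_le ht.1] at hs
  exact ⟨hs.1, hs.2.trans ht.2⟩

theorem C1Norm_le {a b B₀ B₁ : ℝ} {x : ℝ → ℝ} (hab : a ≤ b) (h₀ : ∀ t ∈ Icc a b, |x t| ≤ B₀)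
    (h₁ : ∀ t ∈ Icc a b, |derivWithin x (Icc a b) t| ≤ B₁) : C1Norm a b x ≤ B₀ + B₁ := by
  have : Nonempty (Icc a b) := (nonempty_Icc.mpr hab).to_subtype
  exact add_le_add (ciSup_le fun t => h₀ t t.2) (ciSup_le fun t => h₁ t t.2)

theorem eventually_C1Norm_const_mul_lt {a b δ : ℝ} {η : ℝ → ℝ} (hab : a < b)
    (hη : ContDiff ℝ 1 η) (hδ : 0 < δ) : ∀ᶠ ε in 𝓝 0, C1Norm a b (fun t => ε * η t) < δ := by
  obtain ⟨B₀, hB₀⟩ := isCompact_Icc.exists_bound_of_continuousOn (s := Icc a b)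
    hη.continuous.continuousOn
  obtain ⟨B₁, hB₁⟩ := isCompact_Icc.exists_bound_of_continuousOn (s := Icc a b)
    (hη.continuous_deriv le_rfl).continuousOn
  have hle : ∀ ε, C1Norm a b (fun t => ε * η t) ≤ |ε| * B₀ + |ε| * B₁ := fun ε =>
    C1Norm_le hab.le
      (fun t ht => by rw [abs_mul]; exact mul_le_mul_of_nonneg_left (hB₀ t ht) (abs_nonneg ε))
      (fun t ht => by
        rw [(((hη.differentiable one_ne_zero t).hasDerivAt.const_mul ε).hasDerivWithinAt
          ).derivWithin (uniqueDiffOn_Icc hab t ht), abs_mul]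
        exact mul_le_mul_of_nonneg_left (hB₁ t ht) (abs_nonneg ε))
  have hlim : Tendsto (fun ε : ℝ => |ε| * B₀ + |ε| * B₁) (𝓝 0) (𝓝 0) :=
    Continuous.tendsto' (by fun_prop) 0 0 (by simp)
  exact (hlim.eventually (gt_mem_nhds hδ)).mono fun ε hε => (hle ε).trans_lt hε

theorem IsLocalExtr.hasDerivAt_sub_div_mul_eq_zero {φ ψ : ℝ → ℝ} {φ' ψ' x : ℝ}
    (h : IsLocalExtr (fun ε => φ ε / ψ ε) x) (hφ : HasDerivAt φ φ' x) (hψ : HasDerivAt ψ ψ' x)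
    (hψx : ψ x ≠ 0) : φ' - φ x / ψ x * ψ' = 0 := by
  have := h.hasDerivAt_eq_zero (hφ.div hψ hψx)
  rw [div_eq_zero_iff, or_iff_left (pow_ne_zero 2 hψx)] at this
  field_simp
  linarith

theorem integral_variation_eq_zero_of_isLocalExtr_div {a b : ℝ}
    {f₁ f₁y f₁v f₂ f₂y f₂v : ℝ → ℝ → ℝ → ℝ} (h₁ : IsC1Lagrangian a b f₁ f₁y f₁v)
    (h₂ : IsC1Lagrangian a b f₂ f₂y f₂v) (hab : a < b) {x η : ℝ → ℝ}
    (hx : ContDiffOn ℝ 1 x (Icc a b)) (hη : ContDiff ℝ 1 η)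
    (hextr : IsLocalExtr (fun ε => variationalIntegral a b f₁ (fun t => x t + ε * η t) /
      variationalIntegral a b f₂ (fun t => x t + ε * η t)) 0)
    (hx₂ : variationalIntegral a b f₂ x ≠ 0) :
    ∫ t in a..b,
      (f₁y t (x t) (derivWithin x (Icc a b) t) - variationalIntegral a b f₁ x /
        variationalIntegral a b f₂ x * f₂y t (x t) (derivWithin x (Icc a b) t)) * η t
      + (f₁v t (x t) (derivWithin x (Icc a b) t) - variationalIntegral a b f₁ x /
        variationalIntegral a b f₂ x * f₂v t (x t) (derivWithin x (Icc a b) t)) * deriv η t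
      = 0 := by
  have hstat := hextr.hasDerivAt_sub_div_mul_eq_zero
    (h₁.hasDerivAt_variationalIntegral_add_mul hab hx hη)
    (h₂.hasDerivAt_variationalIntegral_add_mul hab hx hη) (by simpa using hx₂)
  simp only [zero_mul, add_zero] at hstat
  have hηc := hη.continuous.continuousOn (s := Icc a b)
  have hη'c := (hη.continuous_deriv le_rfl).continuousOn (s := Icc a b)
  rw [← hstat, ← integral_const_mul, ← integral_sub]
  · congr 1 with t
    ring
  · exact ContinuousOn.intervalIntegrable_of_Icc hab.le <|
      ((h₁.continuousOn_y.comp_jet hab hx).mul hηc).add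
        ((h₁.continuousOn_v.comp_jet hab hx).mul hη'c)
  · exact ContinuousOn.intervalIntegrable_of_Icc hab.le <| continuousOn_const.mul <|
      ((h₂.continuousOn_y.comp_jet hab hx).mul hηc).add
        ((h₂.continuousOn_v.comp_jet hab hx).mul hη'c)

/-- Natural boundary condition at `a` for the quotient functional
`L[x] = F₁[x] / F₂[x]` when `x(a)` is free and `x(b) = x_b` is fixed. -/
theorem quotient_natural_boundary_left
    (a b : ℝ) (hab : a < b)
    (f1 f1y f1v f2 f2y f2v : ℝ → ℝ → ℝ → ℝ)
    (hf1_cont : ContinuousOn (fun p : ℝ × ℝ × ℝ => f1 p.1 p.2.1 p.2.2)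
      (Set.Icc a b ×ˢ (Set.univ : Set ℝ) ×ˢ (Set.univ : Set ℝ)))
    (hf2_cont : ContinuousOn (fun p : ℝ × ℝ × ℝ => f2 p.1 p.2.1 p.2.2)
      (Set.Icc a b ×ˢ (Set.univ : Set ℝ) ×ˢ (Set.univ : Set ℝ)))
    (hf1y : ∀ t ∈ Set.Icc a b, ∀ y v : ℝ,
      HasDerivAt (fun y' => f1 t y' v) (f1y t y v) y)
    (hf1v : ∀ t ∈ Set.Icc a b, ∀ y v : ℝ,
      HasDerivAt (fun v' => f1 t y v') (f1v t y v) v)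
    (hf2y : ∀ t ∈ Set.Icc a b, ∀ y v : ℝ,
      HasDerivAt (fun y' => f2 t y' v) (f2y t y v) y)
    (hf2v : ∀ t ∈ Set.Icc a b, ∀ y v : ℝ,
      HasDerivAt (fun v' => f2 t y v') (f2v t y v) v)
    (hf1y_cont : ContinuousOn (fun p : ℝ × ℝ × ℝ => f1y p.1 p.2.1 p.2.2)
      (Set.Icc a b ×ˢ (Set.univ : Set ℝ) ×ˢ (Set.univ : Set ℝ)))
    (hf1v_cont : ContinuousOn (fun p : ℝ × ℝ × ℝ => f1v p.1 p.2.1 p.2.2)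
      (Set.Icc a b ×ˢ (Set.univ : Set ℝ) ×ˢ (Set.univ : Set ℝ)))
    (hf2y_cont : ContinuousOn (fun p : ℝ × ℝ × ℝ => f2y p.1 p.2.1 p.2.2)
      (Set.Icc a b ×ˢ (Set.univ : Set ℝ) ×ˢ (Set.univ : Set ℝ)))
    (hf2v_cont : ContinuousOn (fun p : ℝ × ℝ × ℝ => f2v p.1 p.2.1 p.2.2)
      (Set.Icc a b ×ˢ (Set.univ : Set ℝ) ×ˢ (Set.univ : Set ℝ)))
    (xb : ℝ) (xE : ℝ → ℝ)
    (hxE : ContDiffOn ℝ 1 xE (Set.Icc a b))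
    (hxEb : xE b = xb)
    (F1 F2 : (ℝ → ℝ) → ℝ)
    (hF1 : ∀ x, F1 x = ∫ t in a..b, f1 t (x t) (derivWithin x (Set.Icc a b) t))
    (hF2 : ∀ x, F2 x = ∫ t in a..b, f2 t (x t) (derivWithin x (Set.Icc a b) t))
    (hF2ne : ∀ x : ℝ → ℝ, ContDiffOn ℝ 1 x (Set.Icc a b) → x b = xb → F2 x ≠ 0)
    (L : (ℝ → ℝ) → ℝ)
    (hL : ∀ x, L x = F1 x / F2 x)
    (hext :
      (∃ δ > 0, ∀ x : ℝ → ℝ, ContDiffOn ℝ 1 x (Set.Icc a b) →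
        x b = xb → C1Norm a b (fun t => x t - xE t) < δ → L xE ≤ L x) ∨
      (∃ δ > 0, ∀ x : ℝ → ℝ, ContDiffOn ℝ 1 x (Set.Icc a b) →
        x b = xb → C1Norm a b (fun t => x t - xE t) < δ → L x ≤ L xE)) :
    f1v a (xE a) (derivWithin xE (Set.Icc a b) a) -
      (F1 xE / F2 xE) * f2v a (xE a) (derivWithin xE (Set.Icc a b) a) = 0 := by
  obtain rfl : L = fun x => F1 x / F2 x := funext hL
  obtain rfl : F1 = variationalIntegral a b f1 := funext hF1
  obtain rfl : F2 = variationalIntegral a b f2 := funext hF2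
  have h1 : IsC1Lagrangian a b f1 f1y f1v := ⟨hf1_cont, hf1y, hf1v, hf1y_cont, hf1v_cont⟩
  have h2 : IsC1Lagrangian a b f2 f2y f2v := ⟨hf2_cont, hf2y, hf2v, hf2y_cont, hf2v_cont⟩
  suffices hvar : ∀ η : ℝ → ℝ, ContDiff ℝ 1 η → η b = 0 → ∫ t in a..b,
      (f1y t (xE t) (derivWithin xE (Icc a b) t) - variationalIntegral a b f1 xE /
        variationalIntegral a b f2 xE * f2y t (xE t) (derivWithin xE (Icc a b) t)) * η t
      + (f1v t (xE t) (derivWithin xE (Icc a b) t) - variationalIntegral a b f1 xE /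
        variationalIntegral a b f2 xE * f2v t (xE t) (derivWithin xE (Icc a b) t)) * deriv η t
      = 0 by
    simpa using eq_integral_of_forall_integral_mul_add_mul_deriv_eq_zero hab
      ((hf1y_cont.comp_jet hab hxE).sub (continuousOn_const.mul (hf2y_cont.comp_jet hab hxE)))
      ((hf1v_cont.comp_jet hab hxE).sub (continuousOn_const.mul (hf2v_cont.comp_jet hab hxE)))
      hvar a ⟨le_rfl, hab.le⟩
  intro η hη hηb
  refine integral_variation_eq_zero_of_isLocalExtr_div h1 h2 hab hxE hη ?_ (hF2ne xE hxE hxEb)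
  have hadm : ∀ ε : ℝ, ContDiffOn ℝ 1 (fun t => xE t + ε * η t) (Icc a b) :=
    fun ε => hxE.add (contDiff_const.mul hη).contDiffOn
  have hclose : ∀ δ > 0, ∀ᶠ ε in 𝓝 (0 : ℝ),
      C1Norm a b (fun t => (xE t + ε * η t) - xE t) < δ := fun δ hδ => by
    simpa using eventually_C1Norm_const_mul_lt hab hη hδ
  rcases hext with ⟨δ, hδ, hmin⟩ | ⟨δ, hδ, hmax⟩
  · exact .inl <| (hclose δ hδ).mono fun ε hε => by
      simpa using hmin _ (hadm ε) (by simp [hηb, hxEb]) hε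
  · exact .inr <| (hclose δ hδ).mono fun ε hε => by
      simpa using hmax _ (hadm ε) (by simp [hηb, hxEb]) hε
end
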